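/- arXiv:math/0511123 — 2 statements merged into one kernel-verified Lean document; each statement's English description precedes it below -/
import Mathlib

section
/- Let G be a finite group and ω a normalized 3-cocycle on G with values in kˣ, where k is an algebraically closed field of characteristic zero. Then there exists a normalized 3-cocycle ω̃ cohomologous to ω such that ω̃(g, g⁻¹, g)^(exp G) = 1 for all g ∈ G. -/
/-- The coboundary of a 2-cochain `f` (trivial action). -/
def d₂ {G M : Type*} [Group G] [CommGroup M] (f : G → G → M) : G → G → G → M :=
  fun x y z => f y z * (f (x * y) z)⁻¹ * f x (y * z) * (f x y)⁻¹

/-- Multiplicative 3-cocycle condition (trivial action). -/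
def IsMulCocycle₃ {G M : Type*} [Group G] [CommGroup M] (ω : G → G → G → M) : Prop :=
  ∀ x y z w : G, ω x y z * ω x (y * z) w * ω y z w = ω (x * y) z w * ω x y (z * w)

/-- A 3-cochain is normalized if it is trivial whenever an argument is the identity. -/
def IsNormalized₃ {G M : Type*} [Group G] [CommGroup M] (ω : G → G → G → M) : Prop :=
  ∀ x y : G, ω 1 x y = 1 ∧ ω x 1 y = 1 ∧ ω x y 1 = 1

/-- A 2-cochain is normalized if it is trivial whenever an argument is the identity. -/
def IsNormalized₂ {G M : Type*} [Group G] [CommGroup M] (f : G → G → M) : Prop :=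
  (∀ x : G, f x 1 = 1) ∧ (∀ x : G, f 1 x = 1)

/-- `ω` is a 3-coboundary (trivial action). -/
def IsMulCoboundary₃ {G M : Type*} [Group G] [CommGroup M] (ω : G → G → G → M) : Prop :=
  ∃ f : G → G → M, ω = d₂ f

/-- `π_{n,ω}(g) = ω(g,g^{n-1},g) ⋯ ω(g,g,g)`. -/
def piPow {G M : Type*} [Group G] [CommGroup M] (ω : G → G → G → M) (n : ℕ) (g : G) : M :=
  ∏ j ∈ Finset.Ico 1 n, ω g (g ^ j) g

/-!
The cocycle identity at `(g, g⁻¹, g, g⁻¹)` gives `ω(g,g⁻¹,g) ω(g⁻¹,g,g⁻¹) = 1`. For a normalized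
2-cochain `f` one has `df(g,g⁻¹,g) = f(g⁻¹,g) / f(g,g⁻¹)`, so for each pair `{g, g⁻¹}` with
`g ≠ g⁻¹` a single value of `f` can be chosen to make `(ω · df)(g,g⁻¹,g) = 1` and, by the identity
above, `(ω · df)(g⁻¹,g,g⁻¹) = 1` as well. When `g = g⁻¹` the value `ω(g,g,g)` is untouched, but the
same identity says it squares to `1`, and `2` divides the exponent unless `g = 1`.
-/

section

variable {G M : Type*} [Group G] [CommGroup M]

lemma isMulCocycle₃_d₂ (f : G → G → M) : IsMulCocycle₃ (d₂ f) := by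
  intro x y z w
  simp only [d₂, mul_assoc (G := G)]
  apply Additive.ofMul.injective
  simp only [ofMul_mul, ofMul_inv]
  abel

lemma IsMulCocycle₃.mul {ω η : G → G → G → M} (hω : IsMulCocycle₃ ω) (hη : IsMulCocycle₃ η) :
    IsMulCocycle₃ (ω * η) := by
  intro x y z w
  simp only [Pi.mul_apply]
  calc _ = (ω x y z * ω x (y * z) w * ω y z w) * (η x y z * η x (y * z) w * η y z w) := by
        ac_rfl
    _ = _ := by rw [hω, hη, mul_mul_mul_comm]

lemma IsNormalized₃.mul {ω η : G → G → G → M} (hω : IsNormalized₃ ω) (hη : IsNormalized₃ η) :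
    IsNormalized₃ (ω * η) := by
  intro x y
  simp only [Pi.mul_apply, (hω x y).1, (hω x y).2.1, (hω x y).2.2, (hη x y).1, (hη x y).2.1,
    (hη x y).2.2, mul_one, and_self]

lemma IsNormalized₂.isNormalized₃_d₂ {f : G → G → M} (hf : IsNormalized₂ f) :
    IsNormalized₃ (d₂ f) := by
  intro x y
  simp [d₂, hf.1, hf.2]

lemma IsNormalized₂.d₂_apply_inv {f : G → G → M} (hf : IsNormalized₂ f) (g : G) :
    d₂ f g g⁻¹ g = f g⁻¹ g * (f g g⁻¹)⁻¹ := by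
  simp [d₂, hf.1, hf.2]

lemma IsMulCocycle₃.apply_inv_mul_apply_inv {ω : G → G → G → M} (hc : IsMulCocycle₃ ω)
    (hn : IsNormalized₃ ω) (g : G) : ω g g⁻¹ g * ω g⁻¹ g g⁻¹ = 1 := by
  simpa [(hn g g⁻¹).1, (hn g g⁻¹).2.1, (hn g g⁻¹).2.2] using hc g g⁻¹ g g⁻¹

lemma IsMulCocycle₃.pow_orderOf_apply_inv_of_inv_eq {ω : G → G → G → M}
    (hc : IsMulCocycle₃ ω) (hn : IsNormalized₃ ω) {g : G} (hg : g⁻¹ = g) :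
    ω g g⁻¹ g ^ orderOf g = 1 := by
  have hg2 : g ^ 2 = 1 := by rw [sq, ← inv_eq_iff_mul_eq_one, hg]
  rcases (Nat.dvd_prime Nat.prime_two).1 (orderOf_dvd_of_pow_eq_one hg2) with h | h
  · obtain rfl := orderOf_eq_one_iff.1 h
    simp [(hn 1 1).1]
  · have key := hc.apply_inv_mul_apply_inv hn g
    rw [hg] at key ⊢
    rw [h, sq, key]

open Classical in
noncomputable def inversePairCorrection (ω : G → G → G → M) : G → G → M :=
  fun x y => if x = y⁻¹ ∧ WellOrderingRel y x then (ω y x y)⁻¹ else 1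

lemma inversePairCorrection_inv_self {ω : G → G → G → M} {g : G}
    (hr : WellOrderingRel g g⁻¹) : inversePairCorrection ω g⁻¹ g = (ω g g⁻¹ g)⁻¹ :=
  if_pos ⟨rfl, hr⟩

lemma inversePairCorrection_of_not_rel {ω : G → G → G → M} {x y : G}
    (hr : ¬WellOrderingRel y x) : inversePairCorrection ω x y = 1 :=
  if_neg fun h => hr h.2

lemma isNormalized₂_inversePairCorrection (ω : G → G → G → M) :
    IsNormalized₂ (inversePairCorrection ω) := by
  constructor <;> intro x <;> unfold inversePairCorrection <;> refine if_neg ?_ <;>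
    rintro ⟨hx, hr⟩
  · rw [inv_one] at hx
    subst hx
    exact irrefl _ hr
  · obtain rfl := inv_eq_one.1 hx.symm
    exact irrefl _ hr

lemma IsMulCocycle₃.mul_d₂_inversePairCorrection_apply_inv {ω : G → G → G → M}
    (hc : IsMulCocycle₃ ω) (hn : IsNormalized₃ ω) {g : G} (hg : g⁻¹ ≠ g) :
    ω g g⁻¹ g * d₂ (inversePairCorrection ω) g g⁻¹ g = 1 := by
  rw [(isNormalized₂_inversePairCorrection ω).d₂_apply_inv]
  rcases trichotomous_of WellOrderingRel g g⁻¹ with hr | heq | hr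
  · rw [inversePairCorrection_inv_self hr, inversePairCorrection_of_not_rel (asymm hr),
      inv_one, mul_one, mul_inv_cancel]
  · exact absurd heq.symm hg
  · have hf : inversePairCorrection ω g g⁻¹ = (ω g⁻¹ g g⁻¹)⁻¹ := by
      simpa only [inv_inv] using
        inversePairCorrection_inv_self (ω := ω) (g := g⁻¹) (by rwa [inv_inv])
    rw [inversePairCorrection_of_not_rel (asymm hr), hf, inv_inv, one_mul,
      hc.apply_inv_mul_apply_inv hn]

lemma IsMulCocycle₃.pow_orderOf_mul_d₂_inversePairCorrection_apply_inv {ω : G → G → G → M}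
    (hc : IsMulCocycle₃ ω) (hn : IsNormalized₃ ω) (g : G) :
    (ω g g⁻¹ g * d₂ (inversePairCorrection ω) g g⁻¹ g) ^ orderOf g = 1 := by
  by_cases hg : g⁻¹ = g
  · have hd : d₂ (inversePairCorrection ω) g g⁻¹ g = 1 := by
      rw [(isNormalized₂_inversePairCorrection ω).d₂_apply_inv, hg, mul_inv_cancel]
    rw [hd, mul_one, hc.pow_orderOf_apply_inv_of_inv_eq hn hg]
  · rw [hc.mul_d₂_inversePairCorrection_apply_inv hn hg, one_pow]

end

theorem stmt_1_general {G k : Type*} [Group G] [Field k]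
    (ω : G → G → G → kˣ) (hc : IsMulCocycle₃ ω) (hn : IsNormalized₃ ω) :
    ∃ ω' : G → G → G → kˣ, IsMulCocycle₃ ω' ∧ IsNormalized₃ ω' ∧
      (∃ f : G → G → kˣ, IsNormalized₂ f ∧
        ∀ x y z : G, ω' x y z = ω x y z * d₂ f x y z) ∧
      ∀ g : G, (ω' g g⁻¹ g) ^ Monoid.exponent G = 1 := by
  have hf := isNormalized₂_inversePairCorrection ω
  refine ⟨ω * d₂ (inversePairCorrection ω), hc.mul (isMulCocycle₃_d₂ _),
    hn.mul hf.isNormalized₃_d₂, ⟨_, hf, fun _ _ _ => rfl⟩, fun g => ?_⟩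
  obtain ⟨m, hm⟩ := Monoid.order_dvd_exponent g
  rw [hm, pow_mul, Pi.mul_apply, Pi.mul_apply, Pi.mul_apply,
    hc.pow_orderOf_mul_d₂_inversePairCorrection_apply_inv hn g, one_pow]

/-- There is a normalized 3-cocycle `ω̃` cohomologous to `ω` with
`ω̃(g,g⁻¹,g)^(exp G) = 1` for all `g ∈ G`. -/
theorem stmt_1 {G k : Type*} [Group G] [Finite G] [Field k] [CharZero k] [IsAlgClosed k]
    (ω : G → G → G → kˣ) (hc : IsMulCocycle₃ ω) (hn : IsNormalized₃ ω) :
    ∃ ω' : G → G → G → kˣ, IsMulCocycle₃ ω' ∧ IsNormalized₃ ω' ∧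
      (∃ f : G → G → kˣ, IsNormalized₂ f ∧
        ∀ x y z : G, ω' x y z = ω x y z * d₂ f x y z) ∧
      ∀ g : G, (ω' g g⁻¹ g) ^ Monoid.exponent G = 1 :=
  stmt_1_general ω hc hn
end

section
/- Let G be a finite group, ω a normalized 3-cocycle on G with values in kˣ, g ∈ G, and n a positive integer such that the order of g divides n. Define π_{n,ω}(g) = ∏_{j=1}^{n−1} ω(g, gʲ, g). Then π_{n,ω}(g) = π_{|g|, ω̃}(g), where ω̃ is the restriction of ω^(n/|g|) to the cyclic subgroup generated by g. -/
/-! Since `g ^ |g| = 1`, the factor `ω(g, g ^ j, g)` depends only on `j` modulo `|g|`, and by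
normalization it is trivial for `j ≡ 0`. Hence the product over `1 ≤ j < n` splits into
`n / |g|` copies of the product over `1 ≤ j < |g|`, which is `π_{|g|, ω̃}(g)`. -/

open Finset

theorem Function.Periodic.prod_range_mul {M : Type*} [CommMonoid M] {f : ℕ → M} {d : ℕ}
    (hf : Function.Periodic f d) (m : ℕ) :
    ∏ i ∈ range (m * d), f i = (∏ i ∈ range d, f i) ^ m := by
  induction m with
  | zero => simp
  | succ m ih =>
    rw [Nat.succ_mul, prod_range_add, ih, pow_succ]
    congr 1
    refine prod_congr rfl fun i _ => ?_
    rw [add_comm]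
    exact hf.nat_mul m i

section piPow

variable {G M : Type*} [Group G] [CommGroup M]

theorem piPow_eq_prod_range {ω : G → G → G → M} {g : G} (h : ω g 1 g = 1) (N : ℕ) :
    piPow ω N g = ∏ j ∈ range N, ω g (g ^ j) g := by
  rcases N.eq_zero_or_pos with rfl | hN
  · simp [piPow]
  · rw [piPow, prod_range_eq_mul_Ico _ hN, pow_zero, h, one_mul]

theorem piPow_mul_orderOf {ω : G → G → G → M} {g : G} (h : ω g 1 g = 1) (m : ℕ) :
    piPow ω (m * orderOf g) g = piPow ω (orderOf g) g ^ m := by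
  have hper : Function.Periodic (fun j : ℕ => ω g (g ^ j) g) (orderOf g) := fun j => by
    simp only [pow_add, pow_orderOf_eq_one, mul_one]
  simp only [piPow_eq_prod_range h, hper.prod_range_mul]

theorem piPow_pow (ω : G → G → G → M) (m N : ℕ) (g : G) :
    piPow (fun x y z => ω x y z ^ m) N g = piPow ω N g ^ m :=
  prod_pow _ _ _

theorem piPow_restrict_subgroup {H : Subgroup G} (ω : G → G → G → M) (N : ℕ) (g : H) :
    piPow (fun x y z : H => ω x y z) N g = piPow ω N (g : G) := by
  simp [piPow]

end piPow

theorem stmt_4_general {G k : Type*} [Group G] [Field k]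
    (ω : G → G → G → kˣ) (hn : IsNormalized₃ ω)
    (g : G) (n : ℕ) (hdvd : orderOf g ∣ n) :
    piPow ω n g =
      piPow (fun x y z : Subgroup.zpowers g => ω x y z ^ (n / orderOf g)) (orderOf g)
        ⟨g, Subgroup.mem_zpowers g⟩ := by
  obtain ⟨m, rfl⟩ := hdvd
  rcases (orderOf g).eq_zero_or_pos with h0 | hpos
  · simp [piPow, h0]
  rw [Nat.mul_div_cancel_left m hpos, piPow_pow, piPow_restrict_subgroup, mul_comm,
    piPow_mul_orderOf (hn g g).2.1]

/-- If `|g| ∣ n` then `π_(n,ω)(g) = π_(|g|,ω̃)(g)` where `ω̃` is the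
restriction of `ω^(n/|g|)` to the cyclic subgroup generated by `g`. -/
theorem stmt_4 {G k : Type*} [Group G] [Finite G] [Field k] [CharZero k] [IsAlgClosed k]
    (ω : G → G → G → kˣ) (hc : IsMulCocycle₃ ω) (hn : IsNormalized₃ ω)
    (g : G) (n : ℕ) (hpos : 0 < n) (hdvd : orderOf g ∣ n) :
    piPow ω n g =
      piPow (fun x y z : Subgroup.zpowers g => ω x y z ^ (n / orderOf g)) (orderOf g)
        ⟨g, Subgroup.mem_zpowers g⟩ :=
  stmt_4_general ω hn g n hdvd
end
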